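/- arXiv:1907.13104 — 3 statements merged into one kernel-verified Lean document; each statement's English description precedes it below -/
import Mathlib

section
/- Every finite outerplanar graph is isomorphic to a subgraph of the infinite complete outerplanar graph T*, whose vertex set is the set of binary strings (a_1,...,a_n) with a_1=0, a_2=1, a_3=0, and where (a,b) is an edge (for |a| = m ≤ n = |b|, a a prefix-consistent extension) whenever either b_{m+1}=0 and b_i=1 for all i>m+1, or b_{m+1}=1 and b_i=0 for all i>m+1. -/
/-- Vertices of the infinite complete outerplanar graph `T*`: binary strings with
`a₁ = 0, a₂ = 1, a₃ = 0` (including the two root-edge vertices `0` and `01`). -/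
def TstarVert (l : List Bool) : Prop :=
  l = [false] ∨ l = [false, true] ∨ ∃ t : List Bool, l = false :: true :: false :: t

/-- One-sided adjacency in `T*`: `b` extends `a` by `0` followed only by `1`s, or by
`1` followed only by `0`s. -/
def TstarAdjRel (a b : List Bool) : Prop :=
  ∃ k : ℕ, b = a ++ false :: List.replicate k true ∨ b = a ++ true :: List.replicate k false

/-- The infinite complete outerplanar graph `T*`. -/
def Tstar : SimpleGraph {l : List Bool // TstarVert l} where
  Adj a b := TstarAdjRel a.1 b.1 ∨ TstarAdjRel b.1 a.1
  symm := ⟨by intro a b h; tauto⟩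
  loopless := by
    refine ⟨?_⟩
    intro a h
    rcases h with h | h <;> rcases h with ⟨k, h | h⟩ <;>
      · have := congrArg List.length h
        simp at this

/-!
Order the vertices by the argument of their position on the unit circle; two edges with
interleaved endpoints would be intersecting chords, so the edges become noncrossing arcs on
`0, …, n - 1`. Label `0` and `n - 1` by the root edge of `T*` and fill in recursively: for a
chord `l r` labelled by an edge `XY` of `T*`, choose `m` strictly between `l` and `r` such that
no edge passes over `m` except `l r` itself, label `m` by the apex of the triangle glued onto
`XY`, and recurse on `l m` and `m r`. Labels strictly inside the two halves extend that apex by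
complementary bits, which makes the labelling injective.
-/

open List

lemma List.ne_of_length_lt_of_prefix {α : Type*} {X P S : List α} (h : X.length < P.length)
    (hS : P <+: S) : X ≠ S := by
  rintro rfl
  exact hS.length_le.not_gt h

lemma List.ne_of_prefix_of_prefix {α : Type*} {P Q S T : List α} (hPQ : P ≠ Q)
    (hlen : P.length = Q.length) (hS : P <+: S) (hT : Q <+: T) : S ≠ T := by
  rintro rfl
  exact hPQ (prefix_of_prefix_length_le hS hT hlen.le |>.eq_of_length hlen)

def TstarEdge (X Y : List Bool) : Prop := TstarAdjRel X Y ∨ TstarAdjRel Y X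

lemma tstarAdjRel_iff {X Y : List Bool} :
    TstarAdjRel X Y ↔ ∃ c k, Y = X ++ c :: replicate k (!c) := by
  constructor
  · rintro ⟨k, rfl | rfl⟩
    exacts [⟨false, k, rfl⟩, ⟨true, k, rfl⟩]
  · rintro ⟨_ | _, k, rfl⟩
    exacts [⟨k, .inl rfl⟩, ⟨k, .inr rfl⟩]

lemma tstarEdge_append (X : List Bool) (c : Bool) (k : ℕ) :
    TstarEdge X (X ++ c :: replicate k (!c)) :=
  .inl (tstarAdjRel_iff.2 ⟨c, k, rfl⟩)

/-- The third vertex of the triangle of `T*` glued onto the edge `XY`. -/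
def apex (X Y : List Bool) : List Bool :=
  if X.length < Y.length then Y ++ [!(Y.getD X.length false)]
  else X ++ [!(X.getD Y.length false)]

lemma apex_append_left (X : List Bool) (c : Bool) (L : List Bool) :
    apex X (X ++ c :: L) = X ++ c :: L ++ [!c] := by
  simp [apex, List.getD_eq_getElem?_getD]

lemma apex_append_right (X : List Bool) (c : Bool) (L : List Bool) :
    apex (X ++ c :: L) X = X ++ c :: L ++ [!c] := by
  simp [apex, List.getD_eq_getElem?_getD]

lemma TstarEdge.symm {X Y : List Bool} (h : TstarEdge X Y) : TstarEdge Y X := Or.symm h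

lemma TstarEdge.ne {X Y : List Bool} (h : TstarEdge X Y) : X ≠ Y := by
  rcases h with h | h <;> obtain ⟨c, k, rfl⟩ := tstarAdjRel_iff.1 h <;> simp

lemma TstarEdge.length_lt_apex {X Y : List Bool} (h : TstarEdge X Y) :
    X.length < (apex X Y).length ∧ Y.length < (apex X Y).length := by
  rcases h with h | h <;> obtain ⟨c, k, rfl⟩ := tstarAdjRel_iff.1 h
  · rw [apex_append_left]; simp
  · rw [apex_append_right]; simp

lemma TstarEdge.apex_left {X Y : List Bool} (h : TstarEdge X Y) : TstarEdge X (apex X Y) := by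
  rcases h with h | h <;> obtain ⟨c, k, rfl⟩ := tstarAdjRel_iff.1 h
  · simpa [apex_append_left, replicate_succ'] using tstarEdge_append X c (k + 1)
  · simpa [apex_append_right] using tstarEdge_append (Y ++ c :: replicate k (!c)) (!c) 0

lemma TstarEdge.apex_right {X Y : List Bool} (h : TstarEdge X Y) : TstarEdge (apex X Y) Y := by
  rcases h with h | h <;> obtain ⟨c, k, rfl⟩ := tstarAdjRel_iff.1 h
  · simpa [apex_append_left] using (tstarEdge_append (X ++ c :: replicate k (!c)) (!c) 0).symm
  · simpa [apex_append_right, replicate_succ'] using (tstarEdge_append Y c (k + 1)).symm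

lemma TstarEdge.exists_apex_apex {X Y : List Bool} (h : TstarEdge X Y) :
    ∃ b, apex X (apex X Y) = apex X Y ++ [b] ∧ apex (apex X Y) Y = apex X Y ++ [!b] := by
  rcases h with h | h <;> obtain ⟨c, k, rfl⟩ := tstarAdjRel_iff.1 h
  · have hA : X ++ c :: replicate k (!c) ++ [!c] = X ++ c :: replicate (k + 1) (!c) := by
      simp [replicate_succ']
    refine ⟨!c, ?_, ?_⟩
    · rw [apex_append_left, hA, apex_append_left]
    · rw [apex_append_left, apex_append_right]
  · refine ⟨c, ?_, ?_⟩
    · rw [apex_append_right, apex_append_left, Bool.not_not]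
    · have hA : Y ++ c :: replicate k (!c) ++ [!c] = Y ++ c :: replicate (k + 1) (!c) := by
        simp [replicate_succ']
      rw [apex_append_right, hA, apex_append_right]

def Noncrossing {α : Type*} [LT α] (E : α → α → Prop) : Prop :=
  ∀ ⦃i j k l⦄, E i j → E k l → i < k → k < j → j < l → False

section Placement

variable (E : ℕ → ℕ → Prop)

open Classical in
noncomputable def splitPt (l r : ℕ) : ℕ :=
  Nat.findGreatest (fun m => m = l + 1 ∨ E l m) (r - 1)

variable {E} in
lemma splitPt_mem {l r : ℕ} (h : l + 1 < r) : l < splitPt E l r ∧ splitPt E l r < r := by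
  classical
  exact ⟨Nat.lt_of_succ_le (Nat.le_findGreatest (by omega) (.inl rfl)),
    (Nat.findGreatest_le _).trans_lt (by omega)⟩

variable {E} in
lemma splitPt_spec (hE : Noncrossing E) {l r i j : ℕ} (h : l + 1 < r) (hij : E i j)
    (hi : l ≤ i) (him : i < splitPt E l r) (hmj : splitPt E l r < j) (hj : j ≤ r) :
    i = l ∧ j = r := by
  classical
  rcases hi.eq_or_lt with rfl | hi
  · refine ⟨rfl, hj.eq_or_lt.resolve_right fun hjr => ?_⟩
    exact hmj.not_ge (Nat.le_findGreatest (by omega) (.inr hij))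
  · have hm : splitPt E l r = l + 1 ∨ E l (splitPt E l r) :=
      Nat.findGreatest_spec (P := fun m => m = l + 1 ∨ E l m) (by omega : l + 1 ≤ r - 1)
        (.inl rfl)
    exact (hE (hm.resolve_left (by omega)) hij hi him hmj).elim

noncomputable def place (l r : ℕ) (X Y : List Bool) : ℕ → List Bool :=
  if r ≤ l + 1 then fun v => if v = r then Y else X
  else (Set.Iic (splitPt E l r)).piecewise (place l (splitPt E l r) X (apex X Y))
    (place (splitPt E l r) r (apex X Y) Y)
termination_by r - l
decreasing_by all_goals have := splitPt_mem (E := E) (l := l) (r := r) (by omega); omega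

variable {E}

lemma place_of_le {l r : ℕ} (X Y : List Bool) (h : r ≤ l + 1) :
    place E l r X Y = fun v => if v = r then Y else X := by
  rw [place, if_pos h]

lemma place_of_lt {l r : ℕ} (X Y : List Bool) (h : l + 1 < r) :
    place E l r X Y = (Set.Iic (splitPt E l r)).piecewise
      (place E l (splitPt E l r) X (apex X Y)) (place E (splitPt E l r) r (apex X Y) Y) := by
  rw [place, if_neg (by omega)]

lemma place_right (l r : ℕ) (X Y : List Bool) : place E l r X Y r = Y := by
  induction l, r, X, Y using place.induct E with
  | case1 l r X Y h => simp [place_of_le X Y h]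
  | case2 l r X Y h _ ih =>
    have := splitPt_mem (E := E) (not_le.1 h)
    rw [place_of_lt X Y (by omega), Set.piecewise_eq_of_notMem _ _ _ (by simpa using this.2),
      ih]

lemma place_left {l r : ℕ} (X Y : List Bool) (hlr : l < r) : place E l r X Y l = X := by
  induction l, r, X, Y using place.induct E with
  | case1 l r X Y h => simp [place_of_le X Y h, hlr.ne]
  | case2 l r X Y h ih _ =>
    have := splitPt_mem (E := E) (not_le.1 h)
    rw [place_of_lt X Y (by omega), Set.piecewise_eq_of_mem _ _ _ (by simpa using this.1.le),
      ih this.1]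

lemma place_eq_left {l r v : ℕ} (X Y : List Bool) (h : l + 1 < r) (hv : v ≤ splitPt E l r) :
    place E l r X Y v = place E l (splitPt E l r) X (apex X Y) v := by
  rw [place_of_lt X Y h, Set.piecewise_eq_of_mem _ _ _ (Set.mem_Iic.2 hv)]

lemma place_eq_right {l r v : ℕ} (X Y : List Bool) (h : l + 1 < r) (hv : splitPt E l r ≤ v) :
    place E l r X Y v = place E (splitPt E l r) r (apex X Y) Y v := by
  rcases hv.eq_or_lt with rfl | hv
  · rw [place_eq_left X Y h le_rfl, place_right, place_left _ _ (splitPt_mem h).2]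
  · rw [place_of_lt X Y h, Set.piecewise_eq_of_notMem _ _ _ (by simpa using hv)]

lemma prefix_place {X Y : List Bool} (hXY : TstarEdge X Y) {l r v : ℕ} (hlv : l < v)
    (hvr : v < r) :
    apex X Y <+: place E l r X Y v := by
  induction l, r, X, Y using place.induct E generalizing v with
  | case1 => omega
  | case2 l r X Y h ihl ihr =>
    replace h : l + 1 < r := not_le.1 h
    obtain ⟨b, hbl, hbr⟩ := hXY.exists_apex_apex
    rcases lt_trichotomy v (splitPt E l r) with hv | rfl | hv
    · rw [place_eq_left X Y h hv.le]
      exact (prefix_append _ [b]).trans (hbl ▸ ihl hXY.apex_left hlv hv)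
    · rw [place_eq_left X Y h le_rfl, place_right]
    · rw [place_eq_right X Y h hv.le]
      exact (prefix_append _ [!b]).trans (hbr ▸ ihr hXY.apex_right hv hvr)

lemma place_ne_place {X Y : List Bool} (hXY : TstarEdge X Y) {l r v w : ℕ} (hlv : l ≤ v)
    (hvw : v < w) (hwr : w ≤ r) : place E l r X Y v ≠ place E l r X Y w := by
  induction l, r, X, Y using place.induct E generalizing v w with
  | case1 l r X Y h =>
    obtain ⟨rfl, rfl⟩ : v = l ∧ w = r := by omega
    rw [place_left X Y hvw, place_right]
    exact hXY.ne
  | case2 l r X Y h ihl ihr =>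
    replace h : l + 1 < r := not_le.1 h
    have hm := splitPt_mem (E := E) h
    obtain ⟨b, hbl, hbr⟩ := hXY.exists_apex_apex
    have hlen := hXY.length_lt_apex
    set m := splitPt E l r
    set A := apex X Y
    by_cases hwm : w ≤ m
    · rw [place_eq_left X Y h (hvw.le.trans hwm), place_eq_left X Y h hwm]
      exact ihl hXY.apex_left hlv hvw hwm
    by_cases hmv : m ≤ v
    · rw [place_eq_right X Y h hmv, place_eq_right X Y h (hmv.trans hvw.le)]
      exact ihr hXY.apex_right hmv hvw hwr
    rw [place_eq_left X Y h (by omega), place_eq_right X Y h (by omega)]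
    have hv : place E l m X A v = X ∨ A ++ [b] <+: place E l m X A v := by
      rcases hlv.eq_or_lt with rfl | hlv
      · exact .inl (place_left _ _ hm.1)
      · exact .inr (hbl ▸ prefix_place hXY.apex_left hlv (by omega))
    have hw : place E m r A Y w = Y ∨ A ++ [!b] <+: place E m r A Y w := by
      rcases hwr.eq_or_lt with rfl | hwr
      · exact .inl (place_right _ _ _ _)
      · exact .inr (hbr ▸ prefix_place hXY.apex_right (by omega) hwr)
    rcases hv with hv | hv <;> rcases hw with hw | hw
    · rw [hv, hw]; exact hXY.ne
    · rw [hv]; exact ne_of_length_lt_of_prefix (by simp; omega) hw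
    · rw [hw]; exact (ne_of_length_lt_of_prefix (by simp; omega) hv).symm
    · exact ne_of_prefix_of_prefix (by simp) (by simp) hv hw

lemma tstarEdge_place (hE : Noncrossing E) {X Y : List Bool} (hXY : TstarEdge X Y)
    {l r i j : ℕ} (hij : E i j) (hli : l ≤ i) (hlt : i < j) (hjr : j ≤ r) :
    TstarEdge (place E l r X Y i) (place E l r X Y j) := by
  induction l, r, X, Y using place.induct E generalizing i j with
  | case1 l r X Y h =>
    obtain ⟨rfl, rfl⟩ : i = l ∧ j = r := by omega
    rwa [place_left X Y hlt, place_right]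
  | case2 l r X Y h ihl ihr =>
    replace h : l + 1 < r := not_le.1 h
    by_cases hjm : j ≤ splitPt E l r
    · rw [place_eq_left X Y h (hlt.le.trans hjm), place_eq_left X Y h hjm]
      exact ihl hXY.apex_left hij hli hlt hjm
    by_cases hmi : splitPt E l r ≤ i
    · rw [place_eq_right X Y h hmi, place_eq_right X Y h (hmi.trans hlt.le)]
      exact ihr hXY.apex_right hij hmi hlt hjr
    -- an edge passing over the apex can only be the chord `l r` itself
    obtain ⟨rfl, rfl⟩ := splitPt_spec hE h hij hli (not_le.1 hmi) (not_le.1 hjm) hjr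
    rwa [place_left X Y (by omega), place_right]

end Placement

theorem Noncrossing.exists_tstar_embedding {n : ℕ} {H : SimpleGraph (Fin n)}
    (hH : Noncrossing H.Adj) :
    ∃ f : Fin n → {l : List Bool // TstarVert l}, Function.Injective f ∧
      ∀ a b, H.Adj a b → Tstar.Adj (f a) (f b) := by
  let E : ℕ → ℕ → Prop := fun i j => ∃ (hi : i < n) (hj : j < n), H.Adj ⟨i, hi⟩ ⟨j, hj⟩
  have hE : Noncrossing E := fun i j k l ⟨_, _, hij⟩ ⟨_, _, hkl⟩ => hH hij hkl
  have hroot : TstarEdge [false] [false, true] := tstarEdge_append [false] true 0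
  set p := place E 0 (n - 1) [false] [false, true] with hp_def
  have hp (v : Fin n) : TstarVert (p v) := by
    by_cases hvn : (v : ℕ) = n - 1
    · rw [hvn, hp_def, place_right]; exact .inr (.inl rfl)
    rcases Nat.eq_zero_or_pos v with hv0 | hv0
    · rw [hv0, hp_def, place_left _ _ (by omega)]; exact .inl rfl
    obtain ⟨t, ht⟩ := prefix_place (E := E) hroot hv0 (by omega : (v : ℕ) < n - 1)
    exact .inr (.inr ⟨t, ht.symm⟩)
  have hadj {a b : Fin n} (hab : H.Adj a b) (hlt : a < b) :
      Tstar.Adj ⟨p a, hp a⟩ ⟨p b, hp b⟩ :=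
    tstarEdge_place hE hroot ⟨a.2, b.2, hab⟩ (Nat.zero_le _) hlt (by omega)
  refine ⟨fun v => ⟨p v, hp v⟩, fun v w hvw => ?_, fun a b hab => ?_⟩
  · by_contra hne
    rcases lt_or_gt_of_ne hne with h | h
    · exact place_ne_place hroot (Nat.zero_le _) h (by omega) congr($hvw.1)
    · exact place_ne_place hroot (Nat.zero_le _) h (by omega) congr($hvw.1).symm
  · rcases lt_or_gt_of_ne hab.ne with h | h
    · exact hadj hab h
    · exact (hadj hab.symm h).symm

section Circle

open Complex

/-- Twice the signed area of the triangle `abc`; positive iff `a, b, c` run counterclockwise. -/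
def oarea (a b c : ℂ) : ℝ := (b - a).re * (c - a).im - (b - a).im * (c - a).re

lemma oarea_swap (a b c : ℂ) : oarea a c b = -oarea a b c := by
  simp only [oarea]; ring

lemma oarea_rotate (a b c : ℂ) : oarea b c a = oarea a b c := by
  simp only [oarea, sub_re, sub_im]; ring

lemma oarea_smul_relation (a b c d : ℂ) :
    oarea a b d • c + (-oarea a b c) • d = (-oarea c d b) • a + oarea c d a • b := by
  apply Complex.ext <;> simp [oarea] <;> ring

lemma openSegment_inter_nonempty_of_oarea {a b c d : ℂ} (hc : oarea a b c < 0)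
    (hd : 0 < oarea a b d) (ha : 0 < oarea c d a) (hb : oarea c d b < 0) :
    (openSegment ℝ a b ∩ openSegment ℝ c d).Nonempty := by
  have hsum : oarea a b d + -oarea a b c = -oarea c d b + oarea c d a := by
    simp only [oarea, sub_re, sub_im]; ring
  refine ⟨_, mem_openSegment_iff_div.2 ⟨_, _, neg_pos.2 hb, ha, rfl⟩,
    mem_openSegment_iff_div.2 ⟨_, _, hd, neg_pos.2 hc, ?_⟩⟩
  simp only [div_eq_inv_mul, mul_smul, ← smul_add, hsum, oarea_smul_relation]

lemma oarea_exp_mul_I (α β θ : ℝ) :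
    oarea (exp (α * I)) (exp (β * I)) (exp (θ * I)) =
      4 * Real.sin ((β - α) / 2) * Real.sin ((θ - α) / 2) * Real.sin ((θ - β) / 2) := by
  have h : Real.sin ((θ - β) / 2) = Real.sin ((θ + α) / 2 - (β + α) / 2) := by ring_nf
  rw [Real.sin_sub] at h
  simp only [oarea, sub_re, sub_im, exp_ofReal_mul_I_re, exp_ofReal_mul_I_im]
  rw [Real.cos_sub_cos, Real.cos_sub_cos, Real.sin_sub_sin, Real.sin_sub_sin]
  linear_combination (-4 * Real.sin ((β - α) / 2) * Real.sin ((θ - α) / 2)) * h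

lemma oarea_exp_mul_I_pos {α β θ : ℝ} (h₁ : α < β) (h₂ : β < θ) (h₃ : θ < α + 2 * Real.pi) :
    0 < oarea (exp (α * I)) (exp (β * I)) (exp (θ * I)) := by
  have hsin {x y : ℝ} (h : x < y) (h' : y < x + 2 * Real.pi) : 0 < Real.sin ((y - x) / 2) :=
    Real.sin_pos_of_pos_of_lt_pi (by linarith) (by linarith)
  rw [oarea_exp_mul_I]
  have := hsin h₁ (by linarith)
  have := hsin (h₁.trans h₂) h₃
  have := hsin h₂ (by linarith)
  positivity

lemma openSegment_exp_inter_nonempty {α β γ δ : ℝ} (h₁ : α < β) (h₂ : β < γ) (h₃ : γ < δ)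
    (h₄ : δ < α + 2 * Real.pi) :
    (openSegment ℝ (exp (α * I)) (exp (γ * I)) ∩
      openSegment ℝ (exp (β * I)) (exp (δ * I))).Nonempty := by
  apply openSegment_inter_nonempty_of_oarea
  · rw [← neg_pos, ← oarea_swap]; exact oarea_exp_mul_I_pos h₁ h₂ (by linarith)
  · exact oarea_exp_mul_I_pos (h₁.trans h₂) h₃ h₄
  · rw [oarea_rotate]; exact oarea_exp_mul_I_pos h₁ (h₂.trans h₃) h₄
  · rw [← neg_pos, ← oarea_swap]; exact oarea_exp_mul_I_pos h₂ h₃ (by linarith)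

lemma exists_equiv_fin_strictMono_arg {V : Type*} [Fintype V] {f : V → ℂ}
    (hf : Function.Injective f) (hf1 : ∀ v, ‖f v‖ = 1) :
    ∃ e : Fin (Fintype.card V) ≃ V, StrictMono fun i => (f (e i)).arg := by
  have harg : Function.Injective fun v => (f v).arg :=
    fun v w h => hf (ext_norm_arg (by rw [hf1, hf1]) h)
  let : LinearOrder V := LinearOrder.lift' _ harg
  let e := Fintype.orderIsoFinOfCardEq V rfl
  exact ⟨e.toEquiv, e.strictMono⟩

lemma noncrossing_comap_of_strictMono_arg {V ι : Type*} [Preorder ι] {G : SimpleGraph V}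
    {f : V → ℂ} (hf1 : ∀ v, ‖f v‖ = 1)
    (hsep : ∀ a b c d : V, G.Adj a b → G.Adj c d → a ≠ c → a ≠ d → b ≠ c → b ≠ d →
      openSegment ℝ (f a) (f b) ∩ openSegment ℝ (f c) (f d) = ∅)
    {e : ι → V} (he : StrictMono fun i => (f (e i)).arg) : Noncrossing (G.comap e).Adj := by
  intro i j k l hij hkl hik hkj hjl
  have hexp (v : V) : exp ((f v).arg * I) = f v := by
    simpa [hf1 v] using norm_mul_exp_arg_mul_I (f v)
  have hne {i j : ι} (h : i < j) : e i ≠ e j := fun h' => (he h).ne (by simp only [h'])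
  have hcross := openSegment_exp_inter_nonempty (he hik) (he hkj) (he hjl)
    (by linarith [arg_le_pi (f (e l)), neg_pi_lt_arg (f (e i))])
  rw [hexp, hexp, hexp, hexp, hsep _ _ _ _ hij hkl (hne hik) (hne (hik.trans (hkj.trans hjl)))
    (hne hkj).symm (hne hjl)] at hcross
  exact Set.not_nonempty_empty hcross

end Circle

/-- Every finite outerplanar graph is isomorphic to a subgraph of
the universal infinite complete outerplanar graph `T*`. -/
theorem outerplanar_embeds_in_Tstar
    {V : Type*} [Fintype V] (G : SimpleGraph V)
    (h : ∃ f : V → ℂ, Function.Injective f ∧ (∀ v, ‖f v‖ = 1) ∧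
      ∀ a b c d : V, G.Adj a b → G.Adj c d →
        a ≠ c → a ≠ d → b ≠ c → b ≠ d →
        openSegment ℝ (f a) (f b) ∩ openSegment ℝ (f c) (f d) = ∅) :
    ∃ f : V → {l : List Bool // TstarVert l}, Function.Injective f ∧
      ∀ a b : V, G.Adj a b → Tstar.Adj (f a) (f b) := by
  obtain ⟨f, hf, hf1, hsep⟩ := h
  obtain ⟨e, he⟩ := exists_equiv_fin_strictMono_arg hf hf1
  have hcomap := noncrossing_comap_of_strictMono_arg hf1 hsep he
  obtain ⟨g, hg, hgG⟩ := hcomap.exists_tstar_embedding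
  exact ⟨g ∘ e.symm, hg.comp e.symm.injective, fun a b hab => hgG _ _ (by simpa using hab)⟩
end

section
/- In the infinite complete outerplanar graph T*, for every vertex v other than the two vertices 0 and 01 of the root edge, there exists a unique node N of the rhombus tree H* such that π(N, v_j) = v with j ∈ {2, 3} (i.e., v appears exactly once as one of the two 'new' vertices of a rhombus). -/
/-- The digit translation `b`: `0 ↦ 0`, `1 ↦ 10`, `2 ↦ 11`, applied to a trinary
path in the rhombus tree `H*`. -/
def bmap (c : List (Fin 3)) : List Bool :=
  (c.map (fun d => if d = 0 then [false] else if d = 1 then [true, false] else [true, true])).flatten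

/-- `π(H*_c, v_2)` (for `j = false`) and `π(H*_c, v_3)` (for `j = true`), where `c`
is the trinary path (after the root digit `1`) encoding a node of the rhombus tree:
`π(H*_a, v₂) = 0·b(a)` and `π(H*_a, v₃) = 0·b(a)·1`. -/
def piV23 (c : List (Fin 3)) (j : Bool) : List Bool :=
  [false, true, false] ++ bmap c ++ (if j then [true] else [])

def trinaryEncode (p : List (Fin 3) × Bool) : List Bool :=
  bmap p.1 ++ if p.2 then [true] else []

def trinaryDecode : List Bool → List (Fin 3) × Bool
  | [] => ([], false)
  | [true] => ([], true)
  | false :: t => ((0 : Fin 3) :: (trinaryDecode t).1, (trinaryDecode t).2)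
  | true :: false :: t => ((1 : Fin 3) :: (trinaryDecode t).1, (trinaryDecode t).2)
  | true :: true :: t => ((2 : Fin 3) :: (trinaryDecode t).1, (trinaryDecode t).2)

lemma trinaryEncode_cons (d : Fin 3) (c : List (Fin 3)) (j : Bool) :
    trinaryEncode (d :: c, j) =
      (if d = 0 then [false] else if d = 1 then [true, false] else [true, true]) ++
        trinaryEncode (c, j) := by
  simp only [trinaryEncode, bmap, List.map_cons, List.flatten_cons, List.append_assoc]

lemma trinaryDecode_encode (p : List (Fin 3) × Bool) : trinaryDecode (trinaryEncode p) = p := by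
  obtain ⟨c, j⟩ := p
  induction c with
  | nil => cases j <;> rfl
  | cons d c ih =>
    rw [trinaryEncode_cons]
    fin_cases d <;> simp [trinaryDecode, ih]

lemma trinaryEncode_decode (t : List Bool) : trinaryEncode (trinaryDecode t) = t := by
  induction t using trinaryDecode.induct with
  | case1 | case2 => rfl
  | case3 t ih | case4 t ih | case5 t ih =>
    simp [trinaryDecode, trinaryEncode_cons, ih]

lemma trinaryEncode_bijective : Function.Bijective trinaryEncode :=
  Function.bijective_iff_has_inverse.2 ⟨trinaryDecode, trinaryDecode_encode, trinaryEncode_decode⟩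

lemma piV23_eq_append_trinaryEncode (c : List (Fin 3)) (j : Bool) :
    piV23 c j = [false, true, false] ++ trinaryEncode (c, j) := by
  simp only [piV23, trinaryEncode, List.append_assoc]

/-- Every vertex of `T*` other than the root-edge vertices `0` and
`01` appears exactly once as a "new" vertex (`v₂` or `v₃`) of a rhombus node of `H*`. -/
theorem unique_node_as_new_vertex
    (v : List Bool) (hv : TstarVert v) (h0 : v ≠ [false]) (h1 : v ≠ [false, true]) :
    ∃! p : List (Fin 3) × Bool, piV23 p.1 p.2 = v := by
  obtain ⟨t, rfl⟩ : ∃ t, v = false :: true :: false :: t := by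
    rcases hv with h | h | ht
    exacts [absurd h h0, absurd h h1, ht]
  simpa [piV23_eq_append_trinaryEncode] using trinaryEncode_bijective.existsUnique t
end

section
/- For every vertex u of T*, there exists a unique node N of the rhombus tree H* with a proper QR-encoding such that π(N, v_0) = u. -/
/-- Computes the pair `(π(N,v₀), π(N,v₁))` for the node of `H*` whose path (below
the root) is `pref ++ rest`, given the pair for the node with path `pref`. At each
step, `π(N,v₂) = 0·b(pref)` and `π(N,v₃) = 0·b(pref)·1`; descending through the arc
`0`/`1`/`2` yields the new base pair `(v₀,v₂)`/`(v₂,v₃)`/`(v₁,v₃)`. -/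
def v0v1Aux (pref : List (Fin 3)) (st : List Bool × List Bool) :
    List (Fin 3) → List Bool × List Bool
  | [] => st
  | j :: rest =>
    v0v1Aux (pref ++ [j])
      (if j = 0 then (st.1, [false, true, false] ++ bmap pref)
       else if j = 1 then ([false, true, false] ++ bmap pref,
          [false, true, false] ++ bmap pref ++ [true])
       else (st.2, [false, true, false] ++ bmap pref ++ [true])) rest

/-- `π(N, v₀)` for the node `N` of `H*` with trinary path `c` below the root. -/
def piV0 (c : List (Fin 3)) : List Bool :=
  (v0v1Aux [] ([false], [false, true]) c).1

/-- The node of `H*` with QR-encoding `((q_i)_{i∈[m]}, (ρ_i)_{i∈[m]})` (with the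
trailing `q_{m+1} = 0` omitted): take `q_1` forward steps, turn according to
`ρ_1`, etc. -/
def nodeOfQR (qs : List ℕ) (rs : List Bool) : List (Fin 3) :=
  ((qs.zip rs).map
    (fun p => List.replicate p.1 (1 : Fin 3) ++ [if p.2 then (2 : Fin 3) else 0])).flatten

/-- The QR-encoding `((q_i)_{i∈[m]}, (ρ_i)_{i∈[m]})` is proper: the trailing
`q_{m+1}` vanishes (built into `nodeOfQR`) and `q_m > 0` or `m = 1`. -/
def ProperQR (qs : List ℕ) (rs : List Bool) : Prop :=
  qs.length = rs.length ∧ 1 ≤ qs.length ∧ (qs.length = 1 ∨ qs.getLast? ≠ some 0)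

/-!
A proper encoding is either a single turn (`m = 1`, `q₁ = 0`), giving the nodes `0` and `2`
with `π(N, v₀) = 0` and `01`, or its path has the form `d·1·t` with a final turn `t`. In the
latter case `π(N, v₀) = 010·b(d)`, followed by a `1` when `t` is a right turn. As `{0, 10, 11}`
is a prefix code, every binary word is `b(d)` or `b(d)·1` for exactly one `d`, and a path
determines its QR-encoding; so `N ↦ π(N, v₀)` is a bijection from the nodes with proper
encodings onto the vertices `0`, `01`, `010⋯` of `T*`.
-/

def turn (r : Bool) : Fin 3 := if r then 2 else 0

theorem eq_one_or_eq_turn (x : Fin 3) : x = 1 ∨ ∃ r, x = turn r := by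
  fin_cases x
  exacts [Or.inr ⟨false, rfl⟩, Or.inl rfl, Or.inr ⟨true, rfl⟩]

@[simp]
theorem nodeOfQR_nil (rs : List Bool) : nodeOfQR [] rs = [] := rfl

theorem nodeOfQR_cons (q : ℕ) (qs : List ℕ) (r : Bool) (rs : List Bool) :
    nodeOfQR (q :: qs) (r :: rs) = List.replicate q 1 ++ turn r :: nodeOfQR qs rs := by
  simp [nodeOfQR, turn]

theorem nodeOfQR_concat {qs : List ℕ} {rs : List Bool} (h : qs.length = rs.length)
    (q : ℕ) (r : Bool) :
    nodeOfQR (qs ++ [q]) (rs ++ [r]) = nodeOfQR qs rs ++ List.replicate q 1 ++ [turn r] := by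
  simp [nodeOfQR, List.zip_append h, turn]

theorem replicate_one_append_turn_inj {q q' : ℕ} {r r' : Bool} {l l' : List (Fin 3)}
    (h : List.replicate q 1 ++ turn r :: l = List.replicate q' 1 ++ turn r' :: l') :
    q = q' ∧ r = r' ∧ l = l' := by
  induction q generalizing q' with
  | zero =>
    cases q' with
    | zero => cases r <;> cases r' <;> simp_all [turn]
    | succ q' => cases r <;> simp [turn, List.replicate_succ] at h
  | succ q ih =>
    cases q' with
    | zero => cases r' <;> simp [turn, List.replicate_succ] at h
    | succ q' =>
      obtain ⟨rfl, hr, hl⟩ := ih (by simpa [List.replicate_succ] using h)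
      exact ⟨rfl, hr, hl⟩

theorem nodeOfQR_injective {qs qs' : List ℕ} {rs rs' : List Bool}
    (h : qs.length = rs.length) (h' : qs'.length = rs'.length)
    (heq : nodeOfQR qs rs = nodeOfQR qs' rs') : qs = qs' ∧ rs = rs' := by
  induction qs generalizing rs qs' rs' with
  | nil =>
    rcases rs with _ | _ <;> rcases qs' with _ | _ <;> rcases rs' with _ | _ <;>
      simp_all [nodeOfQR_cons]
  | cons q qs ih =>
    rcases rs with _ | ⟨r, rs⟩
    · simp at h
    rcases qs' with _ | ⟨q', qs'⟩ <;> rcases rs' with _ | ⟨r', rs'⟩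
    · simp [nodeOfQR_cons] at heq
    · simp at h'
    · simp at h'
    rw [nodeOfQR_cons, nodeOfQR_cons] at heq
    obtain ⟨rfl, rfl, hl⟩ := replicate_one_append_turn_inj heq
    obtain ⟨rfl, rfl⟩ := ih (by simpa using h) (by simpa using h') hl
    exact ⟨rfl, rfl⟩

theorem exists_eq_nodeOfQR_append_replicate (c : List (Fin 3)) :
    ∃ qs rs q, qs.length = rs.length ∧ c = nodeOfQR qs rs ++ List.replicate q 1 := by
  induction c using List.reverseRecOn with
  | nil => exact ⟨[], [], 0, rfl, rfl⟩
  | append_singleton c x ih =>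
    obtain ⟨qs, rs, q, hlen, rfl⟩ := ih
    rcases eq_one_or_eq_turn x with rfl | ⟨r, rfl⟩
    · exact ⟨qs, rs, q + 1, hlen, by simp [List.replicate_succ']⟩
    · exact ⟨qs ++ [q], rs ++ [r], 0, by simp [hlen], by simp [nodeOfQR_concat hlen]⟩

/-- The nodes of `H*` whose QR-encoding is proper. -/
def IsProperNode (c : List (Fin 3)) : Prop :=
  (∃ r, c = [turn r]) ∨ ∃ d r, c = d ++ [1, turn r]

theorem isProperNode_nodeOfQR {qs : List ℕ} {rs : List Bool} (h : ProperQR qs rs) :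
    IsProperNode (nodeOfQR qs rs) := by
  obtain ⟨hlen, hpos, hlast⟩ := h
  rcases qs.eq_nil_or_concat' with rfl | ⟨qs, q, rfl⟩
  · simp at hpos
  rcases rs.eq_nil_or_concat' with rfl | ⟨rs, r, rfl⟩
  · simp at hlen
  replace hlen : qs.length = rs.length := by simpa using hlen
  rw [nodeOfQR_concat hlen]
  rcases q with _ | q
  · have : qs = [] := by simpa using hlast
    subst this
    obtain rfl : rs = [] := List.eq_nil_of_length_eq_zero hlen.symm
    exact Or.inl ⟨r, rfl⟩
  · exact Or.inr ⟨nodeOfQR qs rs ++ List.replicate q 1, r, by simp [List.replicate_succ']⟩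

theorem exists_properQR_of_isProperNode {c : List (Fin 3)} (hc : IsProperNode c) :
    ∃ qs rs, ProperQR qs rs ∧ nodeOfQR qs rs = c := by
  rcases hc with ⟨r, rfl⟩ | ⟨d, r, rfl⟩
  · exact ⟨[0], [r], ⟨rfl, le_rfl, Or.inl rfl⟩, by simp [nodeOfQR, turn]⟩
  · obtain ⟨qs, rs, q, hlen, rfl⟩ := exists_eq_nodeOfQR_append_replicate d
    refine ⟨qs ++ [q + 1], rs ++ [r], ⟨by simp [hlen], by simp, Or.inr (by simp)⟩, ?_⟩
    simp [nodeOfQR_concat hlen, List.replicate_succ']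

def bdecode : List Bool → List (Fin 3) × Bool
  | [] => ([], false)
  | [true] => ([], true)
  | false :: t => (0 :: (bdecode t).1, (bdecode t).2)
  | true :: false :: t => (1 :: (bdecode t).1, (bdecode t).2)
  | true :: true :: t => (2 :: (bdecode t).1, (bdecode t).2)

/-- `b(d)`, followed by a `1` when the final turn is right. -/
def bcode (p : List (Fin 3) × Bool) : List Bool :=
  bmap p.1 ++ if p.2 then [true] else []

theorem bcode_cons (x : Fin 3) (d : List (Fin 3)) (r : Bool) :
    bcode (x :: d, r) = (if x = 0 then [false] else if x = 1 then [true, false] else [true, true])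
      ++ bcode (d, r) := by
  simp [bcode, bmap]

theorem bdecode_bcode (p : List (Fin 3) × Bool) : bdecode (bcode p) = p := by
  obtain ⟨d, r⟩ := p
  induction d with
  | nil => cases r <;> rfl
  | cons x d ih => fin_cases x <;> simp [bcode_cons, bdecode, ih]

theorem bcode_bdecode (l : List Bool) : bcode (bdecode l) = l := by
  induction l using bdecode.induct <;> simp_all [bdecode, bcode_cons] <;> rfl

theorem bcode_injective : Function.Injective bcode :=
  Function.LeftInverse.injective bdecode_bcode

theorem bcode_surjective : Function.Surjective bcode :=
  Function.RightInverse.surjective bcode_bdecode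

theorem v0v1Aux_append (pref : List (Fin 3)) (st : List Bool × List Bool)
    (c₁ c₂ : List (Fin 3)) :
    v0v1Aux pref st (c₁ ++ c₂) = v0v1Aux (pref ++ c₁) (v0v1Aux pref st c₁) c₂ := by
  induction c₁ generalizing pref st with
  | nil => simp [v0v1Aux]
  | cons j c₁ ih => simpa [v0v1Aux] using ih (pref ++ [j]) _

theorem piV0_turn (r : Bool) : piV0 [turn r] = false :: if r then [true] else [] := by
  cases r <;> rfl

theorem piV0_append_one_turn (d : List (Fin 3)) (r : Bool) :
    piV0 (d ++ [1, turn r]) = false :: true :: false :: bcode (d, r) := by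
  unfold piV0
  rw [v0v1Aux_append]
  cases r <;> simp [v0v1Aux, turn, bcode]

theorem piV0_injOn_isProperNode {c c' : List (Fin 3)} (hc : IsProperNode c)
    (hc' : IsProperNode c') (h : piV0 c = piV0 c') : c = c' := by
  rcases hc with ⟨r, rfl⟩ | ⟨d, r, rfl⟩ <;> rcases hc' with ⟨r', rfl⟩ | ⟨d', r', rfl⟩ <;>
    simp only [piV0_turn, piV0_append_one_turn] at h
  · cases r <;> cases r' <;> simp_all
  · cases r <;> simp at h
  · cases r' <;> simp at h
  · obtain ⟨rfl, rfl⟩ : (d, r) = (d', r') := bcode_injective (by simpa using h)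
    rfl

theorem exists_isProperNode_piV0_eq {u : List Bool} (hu : TstarVert u) :
    ∃ c, IsProperNode c ∧ piV0 c = u := by
  rcases hu with rfl | rfl | ⟨t, rfl⟩
  · exact ⟨[turn false], Or.inl ⟨false, rfl⟩, rfl⟩
  · exact ⟨[turn true], Or.inl ⟨true, rfl⟩, rfl⟩
  · obtain ⟨⟨d, r⟩, hdr⟩ := bcode_surjective t
    refine ⟨d ++ [1, turn r], Or.inr ⟨d, r, rfl⟩, ?_⟩
    rw [piV0_append_one_turn, hdr]

/-- For every vertex `u` of `T*` there is a unique node `N` of the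
rhombus tree `H*` with a proper QR-encoding such that `π(N, v₀) = u`. -/
theorem unique_proper_encoding (u : List Bool) (hu : TstarVert u) :
    ∃! p : List ℕ × List Bool, ProperQR p.1 p.2 ∧ piV0 (nodeOfQR p.1 p.2) = u := by
  obtain ⟨c, hc, rfl⟩ := exists_isProperNode_piV0_eq hu
  obtain ⟨qs, rs, hqr, rfl⟩ := exists_properQR_of_isProperNode hc
  refine ⟨(qs, rs), ⟨hqr, rfl⟩, ?_⟩
  rintro ⟨qs', rs'⟩ ⟨hqr', hpi⟩
  have hnode := piV0_injOn_isProperNode (isProperNode_nodeOfQR hqr')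
    (isProperNode_nodeOfQR hqr) hpi
  obtain ⟨rfl, rfl⟩ := nodeOfQR_injective hqr'.1 hqr.1 hnode
  rfl
end
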